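/- For any A ∈ P_fin,0(ℕ), the divisor-closed submonoid ⟦A⟧ generated by A equals all of P_fin,0(ℕ) if and only if 1 ∈ A and max(A) − 1 ∈ A (i.e., 1 ∈ A ∩ rev(A)). -/
import Mathlib


open Pointwise

/-- The reversal `rev(B) = {max(B) - b : b ∈ B}` of a finite set `B ⊆ ℕ`. -/
def rev (B : Finset ℕ) : Finset ℕ := B.image (fun b => B.sup id - b)

/-- Divisibility in the restricted power monoid `P_fin,0(ℕ)`:
`B` divides `A` if `A = B + C` for some finite `C` containing `0`. -/
def Dvd0 (B A : Finset ℕ) : Prop := ∃ C : Finset ℕ, 0 ∈ C ∧ A = B + C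

/-- The `n`-fold sumset `nA` of a finite set `A ⊆ ℕ` (with `0A = {0}`). -/
def nfold (A : Finset ℕ) : ℕ → Finset ℕ
  | 0 => {0}
  | n + 1 => nfold A n + A

/-- `⟦A⟧`: the set of all `B ∈ P_fin,0(ℕ)` dividing some `n`-fold sumset `nA`;
it is the smallest divisor-closed submonoid of `P_fin,0(ℕ)` containing `A`. -/
def ddSub (A : Finset ℕ) : Set (Finset ℕ) :=
  {B | 0 ∈ B ∧ ∃ n : ℕ, Dvd0 B (nfold A n)}

/-- The sup of a sumset of nonempty finite sets is the sum of the sups. -/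
lemma sup_add_sup (X Y : Finset ℕ) (hX : X.Nonempty) (hY : Y.Nonempty) :
    (X + Y).sup id = X.sup id + Y.sup id := by
  apply le_antisymm
  · apply Finset.sup_le
    intro z hz
    rw [Finset.mem_add] at hz
    obtain ⟨x, hx, y, hy, rfl⟩ := hz
    exact add_le_add (Finset.le_sup (f := id) hx) (Finset.le_sup (f := id) hy)
  · obtain ⟨x, hx, hx'⟩ := X.exists_mem_eq_sup hX id
    obtain ⟨y, hy, hy'⟩ := Y.exists_mem_eq_sup hY id
    rw [hx', hy']
    exact Finset.le_sup (f := id) (Finset.add_mem_add hx hy)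

lemma const_mem_nfold {A : Finset ℕ} {a : ℕ} (ha : a ∈ A) (p : ℕ) : p * a ∈ nfold A p := by
  induction p with
  | zero => simp [nfold]
  | succ n ih =>
    have h : (n + 1) * a = n * a + a := by ring
    rw [h]
    exact Finset.add_mem_add ih ha

lemma zero_mem_nfold {A : Finset ℕ} (h0 : 0 ∈ A) (p : ℕ) : 0 ∈ nfold A p := by
  simpa using const_mem_nfold h0 p

lemma nfold_add (A : Finset ℕ) (p q : ℕ) : nfold A (p + q) = nfold A p + nfold A q := by
  induction q with
  | zero =>
    show nfold A p = nfold A p + {0}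
    rw [show ({0} : Finset ℕ) = (0 : Finset ℕ) from rfl, add_zero]
  | succ q ih =>
    show nfold A (p + q) + A = nfold A p + (nfold A q + A)
    rw [ih, add_assoc]

lemma sup_nfold {A : Finset ℕ} (h0 : 0 ∈ A) (n : ℕ) :
    (nfold A n).sup id = n * A.sup id := by
  induction n with
  | zero => simp [nfold]
  | succ n ih =>
    show (nfold A n + A).sup id = _
    rw [sup_add_sup _ _ ⟨0, zero_mem_nfold h0 n⟩ ⟨0, h0⟩, ih]
    ring

lemma one_mem_of_mem_nfold {A : Finset ℕ} {n : ℕ} (h : (1 : ℕ) ∈ nfold A n) : 1 ∈ A := by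
  induction n with
  | zero => simp [nfold] at h
  | succ n ih =>
    rw [show nfold A (n + 1) = nfold A n + A from rfl, Finset.mem_add] at h
    obtain ⟨x, hx, a, ha, hxa⟩ := h
    have hcases : (x = 1 ∧ a = 0) ∨ (x = 0 ∧ a = 1) := by omega
    rcases hcases with ⟨hx1, _⟩ | ⟨_, ha1⟩
    · exact ih (hx1 ▸ hx)
    · exact ha1 ▸ ha

lemma top_mem_nfold {A : Finset ℕ} (h0 : 0 ∈ A) {n x : ℕ} (hx : x ∈ nfold A n)
    (htop : x + 1 = n * A.sup id) : ∃ b ∈ A, b + 1 = A.sup id := by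
  induction n generalizing x with
  | zero =>
    simp [nfold] at hx
    subst hx
    simp at htop
  | succ n ih =>
    rw [show nfold A (n + 1) = nfold A n + A from rfl, Finset.mem_add] at hx
    obtain ⟨y, hy, a, ha, rfl⟩ := hx
    have hyn : y ≤ n * A.sup id := (sup_nfold h0 n) ▸ Finset.le_sup (f := id) hy
    have ham : a ≤ A.sup id := Finset.le_sup (f := id) ha
    by_cases hcase : a + 1 = A.sup id
    · exact ⟨a, ha, hcase⟩
    · refine ih hy ?_
      rw [Nat.succ_mul] at htop
      set N := n * A.sup id with hN
      set m := A.sup id with hm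
      omega

/-- If `0, 1, max(A) - 1 ∈ A` and `n ≥ max(A)²`, then `nA` is the whole
interval `[0, n·max(A)]`. -/
lemma coverage {A : Finset ℕ} (h0 : 0 ∈ A) (h1 : 1 ∈ A) {b : ℕ} (hb : b ∈ A)
    (hbm : b + 1 = A.sup id) {n t : ℕ} (hn : A.sup id * A.sup id ≤ n)
    (ht : t ≤ n * A.sup id) : t ∈ nfold A n := by
  have hmA : A.sup id ∈ A := by
    obtain ⟨x, hx, hx'⟩ := A.exists_mem_eq_sup ⟨0, h0⟩ id
    rw [hx']; exact hx
  set m := A.sup id with hm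
  have hmpos : 0 < m := by omega
  have hmn : m ≤ n := le_trans (Nat.le_mul_of_pos_left m hmpos) hn
  by_cases hc : t ≤ n
  · -- use `t` ones and `n - t` zeros
    have h2 : t * 1 + (n - t) * 0 ∈ nfold A t + nfold A (n - t) :=
      Finset.add_mem_add (const_mem_nfold h1 t) (const_mem_nfold h0 (n - t))
    have e : nfold A n = nfold A t + nfold A (n - t) := by
      rw [← nfold_add]; congr 1; omega
    rw [e]; simpa using h2
  · -- use `a` zeros, `b' = (n·m - t) % m` copies of `m - 1`, and the rest copies of `m`
    push_neg at hc
    set s := n * m - t with hs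
    have hst : s + t = n * m := Nat.sub_add_cancel ht
    set a := s / m with hadef
    set b' := s % m with hbdef
    have hdm : m * a + b' = s := Nat.div_add_mod s m
    have hb'm : b' < m := Nat.mod_lt s hmpos
    have hmmt : m * m < t := lt_of_le_of_lt hn hc
    have hsub : m * (n - m) + m * m = m * n := by
      rw [← Nat.mul_add, Nat.sub_add_cancel hmn]
    have hcomm : n * m = m * n := Nat.mul_comm n m
    have h2 : s ≤ m * (n - m) := by linarith
    have hma : m * a ≤ m * (n - m) := le_trans (Nat.le.intro hdm) h2
    have ha_le : a ≤ n - m := Nat.le_of_mul_le_mul_left hma hmpos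
    have habn : a + b' ≤ n := by omega
    set c := n - a - b' with hcdef
    have e1 : n * m = a * m + b' * m + c * m := by
      have hnc : n = a + b' + c := by omega
      rw [hnc]; ring
    have e2 : b' * m = b' * b + b' := by rw [← hbm]; ring
    have e4 : a * m = m * a := Nat.mul_comm a m
    have e3 : b' * b + c * m = t := by linarith
    have hmem : a * 0 + (b' * b + c * m) ∈ nfold A a + (nfold A b' + nfold A c) :=
      Finset.add_mem_add (const_mem_nfold h0 a)
        (Finset.add_mem_add (const_mem_nfold hb b') (const_mem_nfold hmA c))
    have e5 : nfold A n = nfold A a + (nfold A b' + nfold A c) := by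
      rw [← nfold_add, ← nfold_add]; congr 1; omega
    rw [e5]
    simpa [e3] using hmem

/-- `⟦A⟧ = P_fin,0(ℕ)` if and only if `1 ∈ A ∩ rev(A)`. -/
theorem ddSub_eq_full_iff (A : Finset ℕ) (h0 : 0 ∈ A) :
    ddSub A = {B : Finset ℕ | 0 ∈ B} ↔ (1 ∈ A ∧ 1 ∈ rev A) := by
  constructor
  · intro h
    have h01 : ({0, 1} : Finset ℕ) ∈ ddSub A := by rw [h]; simp
    obtain ⟨-, n, C, hC0, hEq⟩ := h01
    have h1n : (1 : ℕ) ∈ nfold A n := by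
      rw [hEq]
      have : (1 : ℕ) + 0 ∈ ({0, 1} : Finset ℕ) + C := Finset.add_mem_add (by simp) hC0
      simpa using this
    have h1A : 1 ∈ A := one_mem_of_mem_nfold h1n
    have hsupC : C.sup id + 1 = n * A.sup id := by
      have h01sup : ({0, 1} : Finset ℕ).sup id = 1 := by decide
      have hh := sup_nfold h0 n
      rw [hEq, sup_add_sup _ _ ⟨0, by simp⟩ ⟨0, hC0⟩, h01sup] at hh
      linarith
    obtain ⟨c, hcC, hcsup⟩ := C.exists_mem_eq_sup ⟨0, hC0⟩ id
    have hcn : c ∈ nfold A n := by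
      rw [hEq]
      have : (0 : ℕ) + c ∈ ({0, 1} : Finset ℕ) + C := Finset.add_mem_add (by simp) hcC
      simpa using this
    have htop : c + 1 = n * A.sup id := by rw [← hsupC, hcsup]; rfl
    obtain ⟨b, hbA, hbm⟩ := top_mem_nfold h0 hcn htop
    refine ⟨h1A, ?_⟩
    rw [rev, Finset.mem_image]
    exact ⟨b, hbA, by omega⟩
  · rintro ⟨h1, hrev⟩
    rw [rev, Finset.mem_image] at hrev
    obtain ⟨b, hbA, hb1⟩ := hrev
    have hble : b ≤ A.sup id := Finset.le_sup (f := id) hbA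
    have hbm : b + 1 = A.sup id := by omega
    ext B
    simp only [ddSub, Set.mem_setOf_eq]
    constructor
    · rintro ⟨hB, -⟩; exact hB
    · intro hB
      have hmpos : 0 < A.sup id := by omega
      have hkB : B.sup id ∈ B := by
        obtain ⟨y, hy, hy'⟩ := B.exists_mem_eq_sup ⟨0, hB⟩ id
        rw [hy']; exact hy
      set m := A.sup id with hmdef
      set k := B.sup id with hkdef
      refine ⟨hB, m * m + 2 * k, Finset.range ((m * m + 2 * k) * m - k + 1), by simp, ?_⟩
      set n := m * m + 2 * k with hn
      have hn2 : m * m ≤ n := by rw [hn]; exact Nat.le_add_right _ _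
      have h2k : 2 * k ≤ n * m := by
        calc 2 * k ≤ n := by rw [hn]; omega
        _ ≤ n * m := Nat.le_mul_of_pos_right n hmpos
      obtain ⟨NM, hNM⟩ : ∃ y, n * m = y := ⟨_, rfl⟩
      rw [hNM] at h2k ⊢
      apply Finset.Subset.antisymm
      · intro x hx
        have hxle : x ≤ NM := by
          have hh := (sup_nfold h0 n) ▸ Finset.le_sup (f := id) hx
          rw [← hmdef, hNM] at hh
          exact hh
        rw [Finset.mem_add]
        by_cases hcx : x ≤ NM - k
        · exact ⟨0, hB, x, Finset.mem_range.mpr (by omega), by omega⟩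
        · exact ⟨k, hkB, x - k, Finset.mem_range.mpr (by omega), by omega⟩
      · intro x hx
        rw [Finset.mem_add] at hx
        obtain ⟨p, hp, q, hq, rfl⟩ := hx
        have hpk : p ≤ k := Finset.le_sup (f := id) hp
        have hq' : q ≤ NM - k := by
          have := Finset.mem_range.mp hq
          omega
        exact coverage h0 h1 hbA hbm hn2 (by rw [← hmdef, hNM]; omega)
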